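/- Let f, g : ℝ^d → ℝ with g(x) = e^{-|x|²/2} (up to the normalizing constant (2π)^{-d/2}, the standard Gaussian density) and suppose h : ℝ^d → ℝ is infinitely differentiable with all mixed first-order partial derivatives (each variable at most once) bounded by C·e^{A|x|² + B|x|} for constants A, B, C > 0. Then for every subset u of {1,...,d}, the mixed partial derivative ∂^u of the product x ↦ h(x)·e^{-|x|²/2} is bounded in absolute value by C·(1+|x|)^{|u|}·exp(-(1/2 - A)|x|² + B|x|). -/

import Mathlib

open Real

/-- Partial derivative of `f : ℝ^d → ℝ` along coordinate `i`. -/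
noncomputable def pderiv' {d : ℕ} (i : Fin d)
    (f : EuclideanSpace ℝ (Fin d) → ℝ) : EuclideanSpace ℝ (Fin d) → ℝ :=
  fun x => fderiv ℝ f x (EuclideanSpace.single i 1)

/-- Mixed partial derivative along the coordinates listed in `l`,
each taken once. -/
noncomputable def mixedPartial {d : ℕ} (l : List (Fin d))
    (f : EuclideanSpace ℝ (Fin d) → ℝ) : EuclideanSpace ℝ (Fin d) → ℝ :=
  l.foldr pderiv' f

/-- All ways to split a list into two complementary "sublists". -/
def splits {d : ℕ} : List (Fin d) → List (List (Fin d) × List (Fin d))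
  | [] => [([], [])]
  | i :: l => (splits l).flatMap fun p => [(i :: p.1, p.2), (p.1, i :: p.2)]

/-- The polynomial factor `∏_{j ∈ t} (-(x j))`. -/
noncomputable def Qp {d : ℕ} (t : List (Fin d)) (x : EuclideanSpace ℝ (Fin d)) : ℝ :=
  (t.map fun j => -(x j)).prod

lemma Qp_nil {d : ℕ} (x : EuclideanSpace ℝ (Fin d)) : Qp [] x = 1 := rfl

lemma Qp_cons {d : ℕ} (j : Fin d) (t : List (Fin d)) (x : EuclideanSpace ℝ (Fin d)) :
    Qp (j :: t) x = -(x j) * Qp t x := by simp [Qp]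

lemma coord_abs_le_norm {d : ℕ} (x : EuclideanSpace ℝ (Fin d)) (j : Fin d) :
    |x j| ≤ ‖x‖ := by
  have h1 : |x j| = Real.sqrt ((x j) ^ 2) := by
    rw [Real.sqrt_sq_eq_abs]
  have h2 : ‖x‖ = Real.sqrt (∑ i, ‖x i‖ ^ 2) := EuclideanSpace.norm_eq x
  rw [h1, h2]
  apply Real.sqrt_le_sqrt
  have : (x j) ^ 2 ≤ ∑ i, ‖x i‖ ^ 2 := by
    have := Finset.single_le_sum (f := fun i => ‖x i‖ ^ 2)
      (fun i _ => by positivity) (Finset.mem_univ j)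
    simpa [sq_abs] using this
  exact this

lemma Qp_abs_le {d : ℕ} (t : List (Fin d)) (x : EuclideanSpace ℝ (Fin d)) :
    |Qp t x| ≤ ‖x‖ ^ t.length := by
  induction t with
  | nil => simp [Qp_nil]
  | cons j t ih =>
    rw [Qp_cons, abs_mul, abs_neg, List.length_cons, pow_succ]
    rw [mul_comm (‖x‖ ^ t.length) ‖x‖]
    exact mul_le_mul (coord_abs_le_norm x j) ih (abs_nonneg _) (norm_nonneg _)

lemma coord_contDiff {d : ℕ} (j : Fin d) :
    ContDiff ℝ (⊤ : ℕ∞) (fun y : EuclideanSpace ℝ (Fin d) => y j) := by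
  have : (fun y : EuclideanSpace ℝ (Fin d) => y j)
      = ⇑(EuclideanSpace.proj (𝕜 := ℝ) j) := by funext y; rfl
  rw [this]
  exact (EuclideanSpace.proj (𝕜 := ℝ) j).contDiff

lemma Qp_contDiff {d : ℕ} (t : List (Fin d)) : ContDiff ℝ (⊤ : ℕ∞) (Qp t) := by
  induction t with
  | nil => exact (contDiff_const : ContDiff ℝ (⊤ : ℕ∞) fun _ : EuclideanSpace ℝ (Fin d) => (1:ℝ))
  | cons j t ih =>
    have : Qp (j :: t) = fun x => -(x j) * Qp t x := by funext x; exact Qp_cons j t x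
    rw [this]
    exact ((coord_contDiff j).neg).mul ih

lemma gau_contDiff {d : ℕ} :
    ContDiff ℝ (⊤ : ℕ∞) (fun y : EuclideanSpace ℝ (Fin d) => exp (-‖y‖ ^ 2 / 2)) :=
  Real.contDiff_exp.comp (((contDiff_norm_sq ℝ).neg).div_const 2)

lemma pderiv'_contDiff {d : ℕ} (i : Fin d) {f : EuclideanSpace ℝ (Fin d) → ℝ}
    (hf : ContDiff ℝ (⊤ : ℕ∞) f) : ContDiff ℝ (⊤ : ℕ∞) (pderiv' i f) :=
  (hf.fderiv_right (by simp)).clm_apply contDiff_const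

lemma mixedPartial_contDiff {d : ℕ} (l : List (Fin d)) {f : EuclideanSpace ℝ (Fin d) → ℝ}
    (hf : ContDiff ℝ (⊤ : ℕ∞) f) : ContDiff ℝ (⊤ : ℕ∞) (mixedPartial l f) := by
  induction l with
  | nil => exact hf
  | cons i l ih => exact pderiv'_contDiff i ih

lemma pderiv'_add {d : ℕ} (i : Fin d) {f g : EuclideanSpace ℝ (Fin d) → ℝ}
    {x : EuclideanSpace ℝ (Fin d)}
    (hf : DifferentiableAt ℝ f x) (hg : DifferentiableAt ℝ g x) :
    pderiv' i (fun y => f y + g y) x = pderiv' i f x + pderiv' i g x := by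
  simp [pderiv', fderiv_fun_add hf hg]

lemma pderiv'_mul {d : ℕ} (i : Fin d) {f g : EuclideanSpace ℝ (Fin d) → ℝ}
    {x : EuclideanSpace ℝ (Fin d)}
    (hf : DifferentiableAt ℝ f x) (hg : DifferentiableAt ℝ g x) :
    pderiv' i (fun y => f y * g y) x = pderiv' i f x * g x + f x * pderiv' i g x := by
  simp only [pderiv', fderiv_fun_mul hf hg, ContinuousLinearMap.add_apply,
    ContinuousLinearMap.smul_apply, smul_eq_mul]
  ring

lemma hasFDerivAt_gau {d : ℕ} (x : EuclideanSpace ℝ (Fin d)) :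
    HasFDerivAt (fun y : EuclideanSpace ℝ (Fin d) => exp (-‖y‖ ^ 2 / 2))
      (exp (-‖x‖ ^ 2 / 2) • (-(innerSL ℝ x))) x := by
  have h1 : HasFDerivAt (fun y : EuclideanSpace ℝ (Fin d) => -‖y‖ ^ 2 / 2)
      (-(innerSL ℝ x)) x := by
    have h0 : HasFDerivAt (fun y : EuclideanSpace ℝ (Fin d) => ‖y‖ ^ 2)
        (2 • (innerSL ℝ x)) x := (hasStrictFDerivAt_norm_sq x).hasFDerivAt
    have h2 := h0.const_mul (-(1:ℝ)/2)
    have heq : (fun y : EuclideanSpace ℝ (Fin d) => -‖y‖ ^ 2 / 2)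
        = fun y => (-(1:ℝ)/2) * ‖y‖ ^ 2 := by funext y; ring
    rw [heq]
    refine h2.congr_fderiv ?_
    ext v
    simp [two_smul]
    ring
  exact (Real.hasDerivAt_exp (-‖x‖ ^ 2 / 2)).comp_hasFDerivAt x h1

lemma pderiv'_gau {d : ℕ} (i : Fin d) (x : EuclideanSpace ℝ (Fin d)) :
    pderiv' i (fun y : EuclideanSpace ℝ (Fin d) => exp (-‖y‖ ^ 2 / 2)) x
      = -(x i) * exp (-‖x‖ ^ 2 / 2) := by
  rw [pderiv', (hasFDerivAt_gau x).fderiv]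
  simp [EuclideanSpace.inner_single_right, real_inner_comm]
  ring

lemma pderiv'_coord {d : ℕ} (i j : Fin d) (x : EuclideanSpace ℝ (Fin d)) :
    pderiv' i (fun y : EuclideanSpace ℝ (Fin d) => y j) x
      = if j = i then 1 else 0 := by
  have h : (fun y : EuclideanSpace ℝ (Fin d) => y j)
      = ⇑(EuclideanSpace.proj (𝕜 := ℝ) j) := by funext y; rfl
  rw [pderiv', h, (EuclideanSpace.proj (𝕜 := ℝ) j).fderiv]
  exact EuclideanSpace.single_apply i 1 j

lemma pderiv'_Qp {d : ℕ} (i : Fin d) (t : List (Fin d)) (hit : i ∉ t)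
    (x : EuclideanSpace ℝ (Fin d)) : pderiv' i (Qp t) x = 0 := by
  induction t with
  | nil =>
    have : Qp (d := d) [] = fun _ => (1 : ℝ) := by funext y; rfl
    simp [this, pderiv']
  | cons j t ih =>
    have hij : i ≠ j := fun h => hit (h ▸ (List.mem_cons_self (a := j) (l := t)))
    have hit' : i ∉ t := fun h => hit (List.mem_cons_of_mem j h)
    have hQ : Qp (j :: t) = fun y => -(y j) * Qp t y := by
      funext y; exact Qp_cons j t y
    rw [hQ, pderiv'_mul (f := fun y => -(y j)) i ((coord_contDiff j).differentiable (by simp) x).neg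
      ((Qp_contDiff t).differentiable (by simp) x)]
    have hc : pderiv' i (fun y : EuclideanSpace ℝ (Fin d) => -(y j)) x = 0 := by
      have : (fun y : EuclideanSpace ℝ (Fin d) => -(y j))
          = fun y => (fun z : EuclideanSpace ℝ (Fin d) => z j) y * (-1 : ℝ) := by
        funext y; ring
      rw [this]
      rw [pderiv'_mul i ((coord_contDiff j).differentiable (by simp) x)
        (differentiableAt_const _)]
      have : pderiv' i (fun _ : EuclideanSpace ℝ (Fin d) => (-1 : ℝ)) x = 0 := by
        simp [pderiv']
      rw [pderiv'_coord, this]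
      simp [Ne.symm hij]
    rw [hc, ih hit']
    ring

lemma diffAt_listSum {d : ℕ} {α : Type*} (L : List α)
    (F : α → EuclideanSpace ℝ (Fin d) → ℝ) (x : EuclideanSpace ℝ (Fin d))
    (hF : ∀ a ∈ L, DifferentiableAt ℝ (F a) x) :
    DifferentiableAt ℝ (fun y => (L.map (fun a => F a y)).sum) x := by
  induction L with
  | nil => simpa using differentiableAt_const (0 : ℝ)
  | cons a L ih =>
    simp only [List.map_cons, List.sum_cons]
    exact (hF a ((List.mem_cons_self (a := a) (l := L)))).add
      (ih fun b hb => hF b (List.mem_cons_of_mem a hb))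

lemma pderiv'_listSum {d : ℕ} {α : Type*} (i : Fin d) (L : List α)
    (F : α → EuclideanSpace ℝ (Fin d) → ℝ) (x : EuclideanSpace ℝ (Fin d))
    (hF : ∀ a ∈ L, DifferentiableAt ℝ (F a) x) :
    pderiv' i (fun y => (L.map (fun a => F a y)).sum) x
      = (L.map (fun a => pderiv' i (F a) x)).sum := by
  induction L with
  | nil => simp [pderiv']
  | cons a L ih =>
    simp only [List.map_cons, List.sum_cons]
    rw [pderiv'_add i (hF a ((List.mem_cons_self (a := a) (l := L))))
      (diffAt_listSum L F x fun b hb => hF b (List.mem_cons_of_mem a hb)),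
      ih fun b hb => hF b (List.mem_cons_of_mem a hb)]

lemma sum_splits_cons {d : ℕ} (i : Fin d) (l : List (Fin d))
    (f : List (Fin d) × List (Fin d) → ℝ) :
    ((splits (i :: l)).map f).sum
      = ((splits l).map (fun p => f (i :: p.1, p.2) + f (p.1, i :: p.2))).sum := by
  show (((splits l).flatMap fun p => [(i :: p.1, p.2), (p.1, i :: p.2)]).map f).sum = _
  induction splits l with
  | nil => simp
  | cons p L ih =>
    simp only [List.flatMap_cons, List.map_append, List.sum_append, List.map_cons,
      List.sum_cons, List.map_nil, List.sum_nil, ih]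
    ring

lemma splits_mem {d : ℕ} : ∀ (l : List (Fin d)) (p : List (Fin d) × List (Fin d)),
    p ∈ splits l → p.1.Sublist l ∧ p.2.Sublist l ∧ p.1.length + p.2.length = l.length := by
  intro l
  induction l with
  | nil =>
    intro p hp
    simp only [splits, List.mem_singleton] at hp
    subst hp
    simp
  | cons i l ih =>
    intro p hp
    simp only [splits, List.mem_flatMap] at hp
    obtain ⟨q, hq, hpq⟩ := hp
    obtain ⟨hq1, hq2, hq3⟩ := ih q hq
    simp only [List.mem_cons, List.mem_singleton, List.not_mem_nil, or_false] at hpq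
    rcases hpq with h | h <;> subst h
    · exact ⟨hq1.cons₂ i, hq2.cons i, by simp [hq3, Nat.succ_add]⟩
    · exact ⟨hq1.cons i, hq2.cons₂ i, by simp [← hq3]; omega⟩

lemma splits_sum_pow {d : ℕ} (r : ℝ) : ∀ l : List (Fin d),
    ((splits l).map (fun p => r ^ p.2.length)).sum = (1 + r) ^ l.length := by
  intro l
  induction l with
  | nil => simp [splits]
  | cons i l ih =>
    rw [sum_splits_cons]
    have heq : (fun p : List (Fin d) × List (Fin d) =>
        r ^ p.2.length + r ^ (i :: p.2).length)
        = fun p => (1 + r) * r ^ p.2.length := by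
      funext p
      simp [List.length_cons, pow_succ]
      ring
    rw [heq, List.sum_map_mul_left, ih, List.length_cons, pow_succ]
    ring

lemma abs_listSum_le {α : Type*} (L : List α) (f g : α → ℝ)
    (hfg : ∀ a ∈ L, |f a| ≤ g a) : |(L.map f).sum| ≤ (L.map g).sum := by
  induction L with
  | nil => simp
  | cons a L ih =>
    simp only [List.map_cons, List.sum_cons]
    exact (abs_add_le _ _).trans (add_le_add (hfg a ((List.mem_cons_self (a := a) (l := L))))
      (ih fun b hb => hfg b (List.mem_cons_of_mem a hb)))

lemma repr_lemma {d : ℕ} (h : EuclideanSpace ℝ (Fin d) → ℝ) (hsm : ContDiff ℝ (⊤ : ℕ∞) h) :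
    ∀ l : List (Fin d), l.Nodup → ∀ x,
      mixedPartial l (fun y => h y * exp (-‖y‖ ^ 2 / 2)) x
        = ((splits l).map
            (fun p => mixedPartial p.1 h x * (Qp p.2 x * exp (-‖x‖ ^ 2 / 2)))).sum := by
  intro l
  induction l with
  | nil =>
    intro _ x
    simp [mixedPartial, splits, Qp_nil]
  | cons i l ih =>
    intro hnd x
    have hint : i ∉ l := (List.nodup_cons.mp hnd).1
    have hndl : l.Nodup := (List.nodup_cons.mp hnd).2
    have hfun : mixedPartial l (fun y => h y * exp (-‖y‖ ^ 2 / 2))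
        = fun y => ((splits l).map
            (fun p => mixedPartial p.1 h y * (Qp p.2 y * exp (-‖y‖ ^ 2 / 2)))).sum := by
      funext y; exact ih hndl y
    have hdiff : ∀ p ∈ splits l, DifferentiableAt ℝ
        (fun y => mixedPartial p.1 h y * (Qp p.2 y * exp (-‖y‖ ^ 2 / 2))) x := by
      intro p _
      exact ((mixedPartial_contDiff p.1 hsm).differentiable (by simp) x).mul
        (((Qp_contDiff p.2).differentiable (by simp) x).mul
          ((gau_contDiff).differentiable (by simp) x))
    show pderiv' i (mixedPartial l (fun y => h y * exp (-‖y‖ ^ 2 / 2))) x = _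
    rw [hfun, pderiv'_listSum i (splits l) _ x hdiff, sum_splits_cons]
    apply congrArg
    apply List.map_congr_left
    intro p hp
    obtain ⟨hp1, hp2, _⟩ := splits_mem l p hp
    have hip2 : i ∉ p.2 := fun hmem => hint (hp2.subset hmem)
    have dM : DifferentiableAt ℝ (mixedPartial p.1 h) x :=
      (mixedPartial_contDiff p.1 hsm).differentiable (by simp) x
    have dQ : DifferentiableAt ℝ (Qp p.2) x :=
      (Qp_contDiff p.2).differentiable (by simp) x
    have dG : DifferentiableAt ℝ
        (fun y : EuclideanSpace ℝ (Fin d) => exp (-‖y‖ ^ 2 / 2)) x :=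
      (gau_contDiff).differentiable (by simp) x
    rw [pderiv'_mul i dM (dQ.fun_mul dG), pderiv'_mul i dQ dG, pderiv'_Qp i p.2 hip2 x,
      pderiv'_gau i x]
    have hmp : pderiv' i (mixedPartial p.1 h) x = mixedPartial (i :: p.1) h x := rfl
    rw [hmp, Qp_cons]
    ring

theorem deriv_bound_fIS {d : ℕ} (hd : 1 ≤ d) (A B C : ℝ)
    (hA : 0 < A) (hB : 0 < B) (hC : 0 < C)
    (h : EuclideanSpace ℝ (Fin d) → ℝ) (hsm : ContDiff ℝ (⊤ : ℕ∞) h)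
    (hgr : ∀ (l : List (Fin d)), l.Nodup → ∀ x,
      |mixedPartial l h x| ≤ C * exp (A * ‖x‖^2 + B * ‖x‖)) :
    ∀ (l : List (Fin d)), l.Nodup → ∀ x,
      |mixedPartial l (fun y => h y * exp (-‖y‖^2 / 2)) x| ≤
        C * (1 + ‖x‖) ^ l.length * exp (-(1/2 - A) * ‖x‖^2 + B * ‖x‖) := by
  intro l hnd x
  rw [repr_lemma h hsm l hnd x]
  set K : ℝ := C * exp (A * ‖x‖ ^ 2 + B * ‖x‖) * exp (-‖x‖ ^ 2 / 2) with hK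
  have hKnn : 0 ≤ K := by positivity
  have key : ∀ p ∈ splits l,
      |mixedPartial p.1 h x * (Qp p.2 x * exp (-‖x‖ ^ 2 / 2))|
        ≤ K * ‖x‖ ^ p.2.length := by
    intro p hp
    obtain ⟨hp1, _, _⟩ := splits_mem l p hp
    have hb := hgr p.1 (hp1.nodup hnd) x
    have hQ := Qp_abs_le p.2 x
    rw [abs_mul, abs_mul, abs_of_pos (Real.exp_pos _)]
    calc |mixedPartial p.1 h x| * (|Qp p.2 x| * exp (-‖x‖ ^ 2 / 2))
        ≤ (C * exp (A * ‖x‖ ^ 2 + B * ‖x‖)) * (‖x‖ ^ p.2.length * exp (-‖x‖ ^ 2 / 2)) := by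
          apply mul_le_mul hb _ (by positivity) (by positivity)
          exact mul_le_mul_of_nonneg_right hQ (Real.exp_pos _).le
      _ = K * ‖x‖ ^ p.2.length := by rw [hK]; ring
  calc |((splits l).map
          (fun p => mixedPartial p.1 h x * (Qp p.2 x * exp (-‖x‖ ^ 2 / 2)))).sum|
      ≤ ((splits l).map (fun p => K * ‖x‖ ^ p.2.length)).sum :=
        abs_listSum_le _ _ _ key
    _ = K * (1 + ‖x‖) ^ l.length := by
        rw [List.sum_map_mul_left, splits_sum_pow]
    _ = C * (1 + ‖x‖) ^ l.length * exp (-(1/2 - A) * ‖x‖ ^ 2 + B * ‖x‖) := by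
        rw [hK, show C * rexp (A * ‖x‖ ^ 2 + B * ‖x‖) * rexp (-‖x‖ ^ 2 / 2)
            * (1 + ‖x‖) ^ l.length
          = C * (1 + ‖x‖) ^ l.length
            * (rexp (A * ‖x‖ ^ 2 + B * ‖x‖) * rexp (-‖x‖ ^ 2 / 2)) from by ring,
          ← Real.exp_add]
        congr 2
        ring
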